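/- arXiv:1910.13633 — 2 statements merged into one kernel-verified Lean document; each statement's English description precedes it below -/
import Mathlib

section
/- Uniqueness (Theorem 1; Lemma A.4): In any disclosure game, at most one function V : E → ℝ satisfies the Theorem-1 conditions; that is, if V and W both satisfy conditions (1)–(3), then V = W. -/
open scoped BigOperators

universe u

/-- A disclosure game: a countable evidence space `E` with a disclosure rule
(a preorder `r`, where `r m e` means message `m` is feasible for endowment `e`)
satisfying the lower-bound condition (A4′), a prior `π0 ∈ (0,1)`, evidence
distributions `FG`, `FB` in each state, and a strictly increasing receiver
response `φ` on `[0,1]`. -/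
structure DGame (E : Type u) where
  r : E → E → Prop
  r_refl : ∀ e, r e e
  r_trans : ∀ {a b c : E}, r a b → r b c → r a c
  a4 : ∀ f : ℕ → E, (∀ n, r (f (n + 1)) (f n)) → ∃ N, ∀ n ≥ N, r (f N) (f n)
  π0 : ℝ
  π0_pos : 0 < π0
  π0_lt_one : π0 < 1
  FG : E → ℝ
  FB : E → ℝ
  FG_nonneg : ∀ e, 0 ≤ FG e
  FB_nonneg : ∀ e, 0 ≤ FB e
  FG_hasSum : HasSum FG 1
  FB_hasSum : HasSum FB 1
  FGB_pos : ∀ e, 0 < FG e + FB e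
  φ : ℝ → ℝ
  φ_mono : StrictMonoOn φ (Set.Icc (0 : ℝ) 1)

namespace DGame

variable {E : Type u} (G : DGame E)

/-- The posterior belief `ν(A)` that the state is good conditional on the
evidence lying in `A`. -/
noncomputable def nu (A : Set E) : ℝ :=
  ((∑' e : A, G.FG e) * G.π0) /
    ((∑' e : A, G.FG e) * G.π0 + (∑' e : A, G.FB e) * (1 - G.π0))

/-- `ξ(A) = φ(ν(A))`. -/
noncomputable def xi (A : Set E) : ℝ := G.φ (G.nu A)

/-- `L` is a (nonempty) lower contour set in `A`. -/
def IsLCS (A L : Set E) : Prop :=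
  L.Nonempty ∧ L ⊆ A ∧ ∀ e ∈ L, ∀ e' ∈ A, G.r e' e → e' ∈ L

/-- The Theorem-1 conditions on a candidate value function `V`. -/
def Thm1Conds (V : E → ℝ) : Prop :=
  (∀ e e', G.r e e' → V e ≤ V e') ∧
  (∀ x ∈ Set.range V, G.xi (V ⁻¹' {x}) = x) ∧
  (∀ x ∈ Set.range V, ∀ L : Set E, G.IsLCS (V ⁻¹' {x}) L → x ≤ G.xi L)

/-- A truth-leaning equilibrium `(σ, act, μ)` of the disclosure game. -/
structure Eqm where
  σ : E → E → ℝ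
  act : E → ℝ
  μ : E → ℝ
  σ_nonneg : ∀ e m, 0 ≤ σ e m
  σ_hasSum : ∀ e, HasSum (σ e) 1
  feasible : ∀ e m, 0 < σ e m → G.r m e
  μ_mem : ∀ m, μ m ∈ Set.Icc (0 : ℝ) 1
  sender_opt : ∀ e m, 0 < σ e m → ∀ m', G.r m' e → act m' ≤ act m
  receiver_opt : ∀ m, act m = G.φ (μ m)
  bayes : ∀ m, (∃ e, 0 < σ e m) →
    μ m = (∑' e : {e : E // G.r m e}, σ e.1 m * G.FG e.1 * G.π0) /
      (∑' e : {e : E // G.r m e}, σ e.1 m * (G.FG e.1 * G.π0 + G.FB e.1 * (1 - G.π0)))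
  truth_leaning : ∀ e, (∀ m, G.r m e → act m ≤ act e) → σ e e = 1
  offpath : ∀ m, (¬ ∃ e, 0 < σ e m) → μ m = G.nu {m}

/-- `V` is the sender's value function of the equilibrium `Q`. -/
def IsValueFn (Q : G.Eqm) (V : E → ℝ) : Prop :=
  ∀ e m, 0 < Q.σ e m → V e = Q.act m

end DGame


/-!
Let `D = {e | V e < W e}` and `w(e) = F_G(e) π₀ + F_B(e) (1 - π₀)`. Inside a `V`-level the part
outside `D` is a lower contour set (by monotonicity of `W`), so by condition (3) its posterior is at
least that of the level, hence the posterior of the part inside `D` is at most that of the level.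
Inside a `W`-level the part inside `D` is itself a lower contour set (by monotonicity of `V`).
Summing over levels,
`F_G(D) π₀ ≤ ∑_{e ∈ D} ν(V-level of e) w(e) < ∑_{e ∈ D} ν(W-level of e) w(e) ≤ F_G(D) π₀`,
where the middle inequality holds because `φ ∘ ν` of a level is its value and `V < W` on `D`.
So `D` is empty, and by symmetry `V = W`.
-/

open scoped ENNReal

theorem ENNReal.tsum_subtype_le_of_fiberwise {α β : Type*} (s : Set α) (v : α → β)
    {f g : α → ℝ≥0∞}
    (h : ∀ b, ∑' a : ↥(s ∩ v ⁻¹' {b}), f a ≤ ∑' a : ↥(s ∩ v ⁻¹' {b}), g a) :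
    ∑' a : s, f a ≤ ∑' a : s, g a := by
  have fiberwise (f : α → ℝ≥0∞) : ∑' a : s, f a = ∑' b, ∑' a : ↥(s ∩ v ⁻¹' {b}), f a := by
    rw [tsum_subtype, ← ENNReal.tsum_fiberwise _ v]
    refine tsum_congr fun b => ?_
    rw [tsum_subtype, tsum_subtype, Set.indicator_indicator, Set.inter_comm]
  rw [fiberwise f, fiberwise g]
  exact ENNReal.tsum_le_tsum h

theorem tsum_diff_add_tsum {α : Type*} {f : α → ℝ} (hf : Summable f) {A P : Set α} (h : A ⊆ P) :
    ∑' e : ↥(P \ A), f e + ∑' e : A, f e = ∑' e : P, f e := by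
  conv_rhs => rw [← Set.sdiff_union_of_subset h]
  exact ((hf.subtype _).tsum_union_disjoint Set.disjoint_sdiff_left (hf.subtype _)).symm

namespace DGame

variable {E : Type u} (G : DGame E)

noncomputable def goodMass (A : Set E) : ℝ := (∑' e : A, G.FG e) * G.π0

noncomputable def badMass (A : Set E) : ℝ := (∑' e : A, G.FB e) * (1 - G.π0)

noncomputable def mass (A : Set E) : ℝ := G.goodMass A + G.badMass A

theorem nu_eq_goodMass_div_mass (A : Set E) : G.nu A = G.goodMass A / G.mass A := rfl

theorem goodMass_nonneg (A : Set E) : 0 ≤ G.goodMass A :=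
  mul_nonneg (tsum_nonneg fun e => G.FG_nonneg e) G.π0_pos.le

theorem badMass_nonneg (A : Set E) : 0 ≤ G.badMass A :=
  mul_nonneg (tsum_nonneg fun e => G.FB_nonneg e) (sub_nonneg.mpr G.π0_lt_one.le)

theorem goodMass_le_mass (A : Set E) : G.goodMass A ≤ G.mass A :=
  le_add_of_nonneg_right (G.badMass_nonneg A)

theorem mass_nonneg (A : Set E) : 0 ≤ G.mass A :=
  (G.goodMass_nonneg A).trans (G.goodMass_le_mass A)

theorem nu_mem_Icc (A : Set E) : G.nu A ∈ Set.Icc (0 : ℝ) 1 :=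
  ⟨div_nonneg (G.goodMass_nonneg A) (G.mass_nonneg A),
    div_le_one_of_le₀ (G.goodMass_le_mass A) (G.mass_nonneg A)⟩

/-- Also for `A = ∅`, where `ν A = 0 / 0 = 0`. -/
theorem goodMass_eq_nu_mul_mass (A : Set E) : G.goodMass A = G.nu A * G.mass A := by
  rcases (G.mass_nonneg A).eq_or_lt with h | h
  · rw [← h, mul_zero]
    exact le_antisymm (h ▸ G.goodMass_le_mass A) (G.goodMass_nonneg A)
  · rw [nu_eq_goodMass_div_mass, div_mul_cancel₀ _ h.ne']

theorem goodMass_diff_add {A P : Set E} (h : A ⊆ P) :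
    G.goodMass (P \ A) + G.goodMass A = G.goodMass P := by
  simp only [goodMass, ← add_mul, tsum_diff_add_tsum G.FG_hasSum.summable h]

theorem mass_diff_add {A P : Set E} (h : A ⊆ P) : G.mass (P \ A) + G.mass A = G.mass P := by
  have hB : G.badMass (P \ A) + G.badMass A = G.badMass P := by
    simp only [badMass, ← add_mul, tsum_diff_add_tsum G.FB_hasSum.summable h]
  simp only [mass, ← G.goodMass_diff_add h, ← hB]
  ring

/-- The mediant inequality. -/
theorem goodMass_le_nu_mul_mass_of_diff {A P : Set E} (hAP : A ⊆ P)
    (h : G.nu P * G.mass (P \ A) ≤ G.goodMass (P \ A)) : G.goodMass A ≤ G.nu P * G.mass A := by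
  have hP := G.goodMass_eq_nu_mul_mass P
  rw [← G.goodMass_diff_add hAP, ← G.mass_diff_add hAP] at hP
  linarith

theorem nu_le_nu_of_xi_le {A B : Set E} (h : G.xi A ≤ G.xi B) : G.nu A ≤ G.nu B :=
  (G.φ_mono.le_iff_le (G.nu_mem_Icc A) (G.nu_mem_Icc B)).mp h

theorem nu_lt_nu_of_xi_lt {A B : Set E} (h : G.xi A < G.xi B) : G.nu A < G.nu B :=
  (G.φ_mono.lt_iff_lt (G.nu_mem_Icc A) (G.nu_mem_Icc B)).mp h

/-- `S` meets every level set of `v` in a lower contour set of that level (or not at all). -/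
def IsLowerOnLevels (v : E → ℝ) (S : Set E) : Prop :=
  ∀ ⦃e e'⦄, e ∈ S → v e' = v e → G.r e' e → e' ∈ S

variable {G} {V : E → ℝ}

theorem Thm1Conds.xi_level (hV : G.Thm1Conds V) (e : E) : G.xi (V ⁻¹' {V e}) = V e :=
  hV.2.1 _ ⟨e, rfl⟩

theorem Thm1Conds.nu_level_mul_mass_le (hV : G.Thm1Conds V) {x : ℝ} {L : Set E}
    (hLx : L ⊆ V ⁻¹' {x}) (hL : ∀ e ∈ L, ∀ e' ∈ V ⁻¹' {x}, G.r e' e → e' ∈ L) :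
    G.nu (V ⁻¹' {x}) * G.mass L ≤ G.goodMass L := by
  rcases L.eq_empty_or_nonempty with rfl | ⟨e, he⟩
  · simp [mass, goodMass, badMass]
  have hx : x ∈ Set.range V := ⟨e, hLx he⟩
  have hxi : G.xi (V ⁻¹' {x}) ≤ G.xi L := by
    rw [hV.2.1 x hx]
    exact hV.2.2 x hx L ⟨⟨e, he⟩, hLx, hL⟩
  calc G.nu (V ⁻¹' {x}) * G.mass L ≤ G.nu L * G.mass L :=
        mul_le_mul_of_nonneg_right (G.nu_le_nu_of_xi_le hxi) (G.mass_nonneg L)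
    _ = G.goodMass L := (G.goodMass_eq_nu_mul_mass L).symm

theorem Thm1Conds.nu_level_mul_mass_inter_le (hV : G.Thm1Conds V) {S : Set E}
    (hS : G.IsLowerOnLevels V S) (x : ℝ) :
    G.nu (V ⁻¹' {x}) * G.mass (S ∩ V ⁻¹' {x}) ≤ G.goodMass (S ∩ V ⁻¹' {x}) :=
  hV.nu_level_mul_mass_le Set.inter_subset_right fun _ he _ he' hr =>
    ⟨hS he.1 (he'.trans he.2.symm) hr, he'⟩

theorem Thm1Conds.goodMass_inter_le (hV : G.Thm1Conds V) {S : Set E}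
    (hS : G.IsLowerOnLevels V Sᶜ) (x : ℝ) :
    G.goodMass (S ∩ V ⁻¹' {x}) ≤ G.nu (V ⁻¹' {x}) * G.mass (S ∩ V ⁻¹' {x}) := by
  refine G.goodMass_le_nu_mul_mass_of_diff Set.inter_subset_right ?_
  rw [Set.sdiff_inter_self_eq_sdiff, Set.sdiff_eq, Set.inter_comm]
  exact hV.nu_level_mul_mass_inter_le hS x

variable (G)

noncomputable def goodWeight (e : E) : ℝ≥0∞ := ENNReal.ofReal (G.FG e * G.π0)

noncomputable def weight (e : E) : ℝ≥0∞ := ENNReal.ofReal (G.FG e * G.π0 + G.FB e * (1 - G.π0))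

noncomputable def levelNu (v : E → ℝ) (e : E) : ℝ≥0∞ := ENNReal.ofReal (G.nu (v ⁻¹' {v e}))

theorem tsum_goodWeight (A : Set E) : ∑' e : A, G.goodWeight e = ENNReal.ofReal (G.goodMass A) := by
  rw [goodMass, ← tsum_mul_right, ENNReal.ofReal_tsum_of_nonneg
    (fun e : A => mul_nonneg (G.FG_nonneg e) G.π0_pos.le)
    ((G.FG_hasSum.summable.subtype A).mul_right _)]
  rfl

theorem tsum_weight (A : Set E) : ∑' e : A, G.weight e = ENNReal.ofReal (G.mass A) := by
  have hG : Summable fun e : A => G.FG e * G.π0 :=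
    (G.FG_hasSum.summable.subtype A).mul_right G.π0
  have hB : Summable fun e : A => G.FB e * (1 - G.π0) :=
    (G.FB_hasSum.summable.subtype A).mul_right (1 - G.π0)
  rw [mass, goodMass, badMass, ← tsum_mul_right, ← tsum_mul_right, ← hG.tsum_add hB,
    ENNReal.ofReal_tsum_of_nonneg (fun e : A => add_nonneg (mul_nonneg (G.FG_nonneg e) G.π0_pos.le)
      (mul_nonneg (G.FB_nonneg e) (sub_nonneg.mpr G.π0_lt_one.le))) (hG.add hB)]
  rfl

theorem weight_ne_zero (e : E) : G.weight e ≠ 0 := by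
  have hG := mul_nonneg (G.FG_nonneg e) G.π0_pos.le
  have hB := mul_nonneg (G.FB_nonneg e) (sub_nonneg.mpr G.π0_lt_one.le)
  have hpos : 0 < G.FG e * G.π0 + G.FB e * (1 - G.π0) := by
    rcases (G.FG_nonneg e).eq_or_lt with h | h
    · have hFB : 0 < G.FB e := by linarith [G.FGB_pos e]
      nlinarith [mul_pos hFB (sub_pos.mpr G.π0_lt_one)]
    · nlinarith [mul_pos h G.π0_pos]
  simpa [weight] using hpos

theorem tsum_levelNu_mul_weight_inter (v : E → ℝ) (S : Set E) (x : ℝ) :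
    ∑' e : ↥(S ∩ v ⁻¹' {x}), G.levelNu v e * G.weight e =
      ENNReal.ofReal (G.nu (v ⁻¹' {x}) * G.mass (S ∩ v ⁻¹' {x})) := by
  have hlevel (e : ↥(S ∩ v ⁻¹' {x})) : G.levelNu v e = ENNReal.ofReal (G.nu (v ⁻¹' {x})) := by
    rw [levelNu, e.2.2]
  simp only [hlevel, ENNReal.tsum_mul_left, tsum_weight, ENNReal.ofReal_mul (G.nu_mem_Icc _).1]

variable {G}

theorem Thm1Conds.tsum_levelNu_mul_weight_le (hV : G.Thm1Conds V) {S : Set E}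
    (hS : G.IsLowerOnLevels V S) :
    ∑' e : S, G.levelNu V e * G.weight e ≤ ∑' e : S, G.goodWeight e := by
  refine ENNReal.tsum_subtype_le_of_fiberwise (f := fun e => G.levelNu V e * G.weight e)
    (g := G.goodWeight) S V fun x => ?_
  rw [tsum_levelNu_mul_weight_inter, tsum_goodWeight]
  exact ENNReal.ofReal_le_ofReal (hV.nu_level_mul_mass_inter_le hS x)

theorem Thm1Conds.tsum_goodWeight_le (hV : G.Thm1Conds V) {S : Set E}
    (hS : G.IsLowerOnLevels V Sᶜ) :
    ∑' e : S, G.goodWeight e ≤ ∑' e : S, G.levelNu V e * G.weight e := by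
  refine ENNReal.tsum_subtype_le_of_fiberwise (f := G.goodWeight)
    (g := fun e => G.levelNu V e * G.weight e) S V fun x => ?_
  rw [tsum_levelNu_mul_weight_inter, tsum_goodWeight]
  exact ENNReal.ofReal_le_ofReal (hV.goodMass_inter_le hS x)

theorem Thm1Conds.le_of_thm1Conds {W : E → ℝ} (hV : G.Thm1Conds V) (hW : G.Thm1Conds W) :
    W ≤ V := by
  intro e₀
  by_contra! h₀
  set D : Set E := {e | V e < W e}
  have hVD : G.IsLowerOnLevels V Dᶜ := fun e e' he hv hr =>
    fun he' : V e' < W e' => he (by linarith [hW.1 e' e hr] : V e < W e)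
  have hWD : G.IsLowerOnLevels W D := fun e e' (he : V e < W e) hw hr =>
    (by linarith [hV.1 e' e hr] : V e' < W e')
  have hnu (e : D) : G.nu (V ⁻¹' {V e}) < G.nu (W ⁻¹' {W e}) :=
    G.nu_lt_nu_of_xi_lt (by rw [hV.xi_level, hW.xi_level]; exact e.2)
  have hfin : ∑' e : D, G.levelNu V e * G.weight e ≠ ∞ := by
    refine ne_top_of_le_ne_top (G.tsum_weight D ▸ ENNReal.ofReal_ne_top)
      (ENNReal.tsum_le_tsum fun e => mul_le_of_le_one_left' ?_)
    exact ENNReal.ofReal_le_one.mpr (G.nu_mem_Icc _).2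
  have hmid : ∑' e : D, G.levelNu V e * G.weight e < ∑' e : D, G.levelNu W e * G.weight e := by
    refine ENNReal.tsum_lt_tsum (i := ⟨e₀, h₀⟩) hfin
      (fun e => mul_le_mul_left (ENNReal.ofReal_le_ofReal (hnu e).le) _) ?_
    refine ENNReal.mul_lt_mul_left (G.weight_ne_zero e₀) ENNReal.ofReal_ne_top ?_
    exact (ENNReal.ofReal_lt_ofReal_iff ((G.nu_mem_Icc _).1.trans_lt (hnu ⟨e₀, h₀⟩))).mpr
      (hnu ⟨e₀, h₀⟩)
  exact lt_irrefl _ <|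
    ((hV.tsum_goodWeight_le hVD).trans_lt hmid).trans_le (hW.tsum_levelNu_mul_weight_le hWD)

end DGame

theorem stmt_2_general {E : Type u} (G : DGame E) (V W : E → ℝ)
    (hV : G.Thm1Conds V) (hW : G.Thm1Conds W) : V = W :=
  le_antisymm (hW.le_of_thm1Conds hV) (hV.le_of_thm1Conds hW)

/-- Theorem 1 (uniqueness; Lemma A.4): at most one function satisfies the
Theorem-1 conditions. -/
theorem stmt_2 {E : Type u} [Countable E] (G : DGame E) (V W : E → ℝ)
    (hV : G.Thm1Conds V) (hW : G.Thm1Conds W) : V = W :=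
  stmt_2_general G V W hV hW
end

section
/- In the left-censored disclosure model, let E₀ = {e ∈ E : N(e) = 0}. Then ν(L₀) ≥ ν(E₀) for every lower contour set L₀ in E₀ with respect to the suffix order ≼. -/
open scoped BigOperators

namespace LeftCensored

/-- Evidence: a finite sequence of binary signals; `true` stands for a high
return (`g`) and `false` for a low return (`b`). A sequence is a list whose
suffixes are the most recent signals. -/
abbrev Ev := List Bool

/-- `G(e)`: the number of `g`'s in `e`. -/
def Gc (e : Ev) : ℕ := e.count true

/-- `B(e)`: the number of `b`'s in `e`. -/
def Bc (e : Ev) : ℕ := e.count false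

/-- `D(e) = G(e) − B(e)`. -/
def D (e : Ev) : ℤ := (Gc e : ℤ) - (Bc e : ℤ)

/-- `N(e) = max_{0 ≤ k ≤ L(e)} D(e|_k)`, the maximum of `D` over all suffixes
(truncations from the left) of `e`; since the empty suffix gives `D = 0`, this
equals the fold of `max` over the suffixes starting from `0`. -/
def N (e : Ev) : ℤ := (e.tails.map D).foldr max 0

/-- The evidence distribution in the good state. -/
noncomputable def FG (p q : ℝ) (e : Ev) : ℝ := (1 - p - q) * p ^ Gc e * q ^ Bc e

/-- The evidence distribution in the bad state. -/
noncomputable def FB (p q : ℝ) (e : Ev) : ℝ := (1 - p - q) * p ^ Bc e * q ^ Gc e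

/-- Posterior belief `ν(A)` that the state is good given evidence in `A`. -/
noncomputable def nu (p q π0 : ℝ) (A : Set Ev) : ℝ :=
  ((∑' e : A, FG p q e) * π0) /
    ((∑' e : A, FG p q e) * π0 + (∑' e : A, FB p q e) * (1 - π0))

/-- `α = (1 − √(1 − 4pq))/2`. -/
noncomputable def alpha (p q : ℝ) : ℝ := (1 - Real.sqrt (1 - 4 * p * q)) / 2

/-- The sender's equilibrium value function (Proposition 4). -/
noncomputable def V (p q π0 : ℝ) (e : Ev) : ℝ :=
  1 / (1 + ((1 - π0) / π0) * ((p - alpha p q) / (q - alpha p q)) * (q / p) ^ (N e + 1))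

/-- `L` is a (nonempty) lower contour set in `A` with respect to the suffix
(left-censoring) order. -/
def IsLCS (A L : Set Ev) : Prop :=
  L.Nonempty ∧ L ⊆ A ∧ ∀ e ∈ L, ∀ e' ∈ A, e' <:+ e → e' ∈ L

/-- A truth-leaning equilibrium of the left-censored disclosure game (the
receiver's response `φ` is the identity). -/
structure Eqm (p q π0 : ℝ) where
  σ : Ev → Ev → ℝ
  act : Ev → ℝ
  μ : Ev → ℝ
  σ_nonneg : ∀ e m, 0 ≤ σ e m
  σ_hasSum : ∀ e, HasSum (σ e) 1
  feasible : ∀ e m, 0 < σ e m → m <:+ e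
  μ_mem : ∀ m, μ m ∈ Set.Icc (0 : ℝ) 1
  sender_opt : ∀ e m, 0 < σ e m → ∀ m', m' <:+ e → act m' ≤ act m
  receiver_opt : ∀ m, act m = μ m
  bayes : ∀ m, (∃ e, 0 < σ e m) →
    μ m = (∑' e : {e : Ev // m <:+ e}, σ e.1 m * FG p q e.1 * π0) /
      (∑' e : {e : Ev // m <:+ e}, σ e.1 m * (FG p q e.1 * π0 + FB p q e.1 * (1 - π0)))
  truth_leaning : ∀ e, (∀ m, m <:+ e → act m ≤ act e) → σ e e = 1
  offpath : ∀ m, (¬ ∃ e, 0 < σ e m) → μ m = nu p q π0 {m}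

end LeftCensored

/-!
Since `nu` is an increasing function of the likelihood ratio `mass p q A / mass q p A` of the
unnormalised weights, it suffices to show that `M = E₀ \ L` has ratio at most that of `E₀`.
As `L` is closed under suffixes, `M` is closed under extension inside `E₀`, so it is the
disjoint union of the cones `{e ∈ E₀ | b <:+ e}` over its suffix-minimal elements `b`.
If `D b = -m`, that cone is `{w | N w ≤ m} ++ b`. Cutting a word with `N e ≥ 1` at its
shortest suffix with `D = 1` gives the recursion `T (m + 1) = T 0 + p Z T m` for the mass
`T m` of `{N ≤ m}`, `Z` being the mass of the excursions; the swapped weights satisfy the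
same recursion with `q` in place of `p`, and comparing the two by induction on `m` shows that
every cone has ratio at most that of `E₀`.
-/

namespace LeftCensored

section Walk

lemma D_cons (x : Bool) (e : Ev) : D (x :: e) = D e + if x then 1 else -1 := by
  cases x <;> simp [D, Gc, Bc] <;> ring

lemma D_append (w e : Ev) : D (w ++ e) = D w + D e := by
  simp only [D, Gc, Bc, List.count_append]; push_cast; ring

@[simp] lemma N_nil : N [] = 0 := rfl

lemma N_cons (x : Bool) (e : Ev) : N (x :: e) = max (D (x :: e)) (N e) := by
  simp [N]

lemma N_nonneg (e : Ev) : 0 ≤ N e := by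
  induction e with
  | nil => rfl
  | cons x e ih => rw [N_cons]; exact le_max_of_le_right ih

lemma D_le_N (e : Ev) : D e ≤ N e := by
  cases e with
  | nil => rfl
  | cons x e => rw [N_cons]; exact le_max_left _ _

lemma N_append (w e : Ev) : N (w ++ e) = max (N w + D e) (N e) := by
  induction w with
  | nil => simp [max_eq_right (D_le_N e)]
  | cons x w ih =>
    rw [List.cons_append, N_cons, ih, N_cons, ← List.cons_append, D_append, ← max_assoc,
      max_add_add_right]

lemma D_le_N_of_suffix {s e : Ev} (h : s <:+ e) : D s ≤ N e := by
  obtain ⟨w, rfl⟩ := h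
  rw [N_append]
  exact (D_le_N s).trans (le_max_right _ _)

def excursions : Set Ev := {u | N u = 0 ∧ D u = 0}

lemma N_append_true_cons (w : Ev) {u : Ev} (hu : u ∈ excursions) :
    N (w ++ true :: u) = N w + 1 := by
  rw [N_append, N_cons, D_cons, hu.1, hu.2]
  have := N_nonneg w
  simp only [if_true]
  omega

/-- Every sequence with `N e ≥ 1` splits at the shortest suffix `true :: u` with `D = 1`. -/
lemma exists_eq_append_true_cons {e : Ev} (he : 1 ≤ N e) :
    ∃ w, ∃ u ∈ excursions, e = w ++ true :: u := by
  induction e with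
  | nil => simp at he
  | cons x e ih =>
    by_cases h : 1 ≤ N e
    · obtain ⟨w, u, hu, rfl⟩ := ih h
      exact ⟨x :: w, u, hu, rfl⟩
    · have hN : N e = 0 := by have := N_nonneg e; omega
      have hD := D_le_N e
      rw [N_cons, hN, D_cons] at he
      cases x
      · simp only [Bool.false_eq_true, if_false] at he; omega
      · exact ⟨[], e, ⟨hN, by simp only [if_true] at he; omega⟩, rfl⟩

lemma eq_of_true_cons_suffix {u₁ u₂ : Ev} (hu₁ : u₁ ∈ excursions) (hu₂ : u₂ ∈ excursions)
    (h : true :: u₁ <:+ true :: u₂) : u₁ = u₂ := by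
  rcases List.suffix_cons_iff.mp h with h | h
  · exact (List.cons.inj h).2
  · have := D_le_N_of_suffix h
    simp [D_cons, hu₁.2, hu₂.1] at this

lemma injOn_append_true_cons (S : Set Ev) :
    Set.InjOn (fun x : Ev × Ev => x.1 ++ true :: x.2) (S ×ˢ excursions) := by
  rintro ⟨w₁, u₁⟩ ⟨-, hu₁⟩ ⟨w₂, u₂⟩ ⟨-, hu₂⟩ h
  obtain rfl : u₁ = u₂ :=
    (List.suffix_or_suffix_of_suffix ⟨w₁, h⟩ ⟨w₂, rfl⟩).elim (eq_of_true_cons_suffix hu₁ hu₂)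
      fun h' => (eq_of_true_cons_suffix hu₂ hu₁ h').symm
  simpa using h

def level (m : ℕ) : Set Ev := {e | N e ≤ m}

lemma level_zero : level 0 = {e | N e = 0} := by
  ext e
  have := N_nonneg e
  simp only [level, Set.mem_ofPred_eq, Nat.cast_zero]
  omega

lemma level_succ (m : ℕ) :
    level (m + 1) =
      level 0 ∪ (fun x : Ev × Ev => x.1 ++ true :: x.2) '' (level m ×ˢ excursions) := by
  ext e
  simp only [level, Set.mem_union, Set.mem_ofPred_eq, Set.mem_image, Set.mem_prod, Prod.exists]
  constructor
  · intro he
    by_cases h : 1 ≤ N e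
    · obtain ⟨w, u, hu, rfl⟩ := exists_eq_append_true_cons h
      rw [N_append_true_cons w hu] at he
      exact Or.inr ⟨w, u, ⟨by push_cast at he; omega, hu⟩, rfl⟩
    · exact Or.inl (by push_cast; omega)
  · rintro (he | ⟨w, u, ⟨hw, hu⟩, rfl⟩)
    · have := N_nonneg e; push_cast at he ⊢; omega
    · rw [N_append_true_cons w hu]; push_cast; omega

lemma disjoint_level_zero_image (m : ℕ) :
    Disjoint (level 0) ((fun x : Ev × Ev => x.1 ++ true :: x.2) '' (level m ×ˢ excursions)) := by
  rw [Set.disjoint_right]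
  rintro _ ⟨⟨w, u⟩, ⟨-, hu⟩, rfl⟩ h
  have := N_nonneg w
  simp only [level, Set.mem_ofPred_eq, N_append_true_cons w hu] at h
  omega

lemma cone_eq_image {b : Ev} (hb : N b = 0) {m : ℕ} (hm : D b = -m) :
    {e | N e = 0 ∧ b <:+ e} = (· ++ b) '' level m := by
  ext e
  simp only [level, Set.mem_ofPred_eq, Set.mem_image]
  constructor
  · rintro ⟨he, w, rfl⟩
    rw [N_append, hb, hm] at he
    exact ⟨w, by omega, rfl⟩
  · rintro ⟨w, hw, rfl⟩
    rw [N_append, hb, hm]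
    exact ⟨by omega, w, rfl⟩

end Walk

section Mass

variable {p q : ℝ}

/-- The normalising factor `1 - p - q` of `FG` and `FB` cancels in `nu`. -/
def weight (p q : ℝ) (e : Ev) : ℝ := p ^ Gc e * q ^ Bc e

lemma weight_cons (x : Bool) (e : Ev) :
    weight p q (x :: e) = (if x then p else q) * weight p q e := by
  cases x <;> simp [weight, Gc, Bc, pow_succ] <;> ring

lemma weight_append (w e : Ev) : weight p q (w ++ e) = weight p q w * weight p q e := by
  simp only [weight, Gc, Bc, List.count_append, pow_add]; ring

lemma weight_nonneg (hp : 0 ≤ p) (hq : 0 ≤ q) (e : Ev) : 0 ≤ weight p q e := by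
  unfold weight; positivity

lemma weight_swap_of_D_eq_zero {e : Ev} (h : D e = 0) : weight q p e = weight p q e := by
  have : Gc e = Bc e := by simp only [D] at h; omega
  rw [weight, weight, this, mul_comm]

lemma weight_eq_prod (e : Ev) : weight p q e = (e.map fun x => if x then p else q).prod := by
  induction e with
  | nil => simp [weight, Gc, Bc]
  | cons x e ih => rw [weight_cons, ih, List.map_cons, List.prod_cons]

lemma FG_eq_weight (e : Ev) : FG p q e = (1 - p - q) * weight p q e := by
  rw [FG, weight, mul_assoc]

lemma FB_eq_weight (e : Ev) : FB p q e = (1 - p - q) * weight q p e := by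
  rw [FB, weight]; ring

/-- The words of length `n` carry total weight `(p + q) ^ n`. -/
theorem summable_weight (hp : 0 ≤ p) (hq : 0 ≤ q) (hpq : p + q < 1) :
    Summable (weight p q) := by
  have hlen (n : ℕ) : ∑' f : Fin n → Bool, weight p q (List.ofFn f) = (p + q) ^ n := by
    classical
    simp only [tsum_fintype, weight_eq_prod, List.map_ofFn, List.prod_ofFn, Function.comp_apply]
    rw [← Fintype.prod_sum fun (_ : Fin n) (x : Bool) => if x then p else q]
    simp
  rw [← List.equivSigmaTuple.symm.summable_iff]
  refine (summable_sigma_of_nonneg fun _ => weight_nonneg hp hq _).mpr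
    ⟨fun _ => Summable.of_finite, ?_⟩
  simpa only [Function.comp_apply, List.equivSigmaTuple_symm_apply, hlen] using
    summable_geometric_of_lt_one (by positivity) hpq

noncomputable def mass (p q : ℝ) (S : Set Ev) : ℝ := ∑' e : S, weight p q e

lemma mass_nonneg (hp : 0 ≤ p) (hq : 0 ≤ q) (S : Set Ev) : 0 ≤ mass p q S :=
  tsum_nonneg fun _ => weight_nonneg hp hq _

lemma mass_pos_of_nil_mem (hp : 0 ≤ p) (hq : 0 ≤ q) (hpq : p + q < 1) {S : Set Ev}
    (hS : [] ∈ S) : 0 < mass p q S :=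
  calc (0 : ℝ) < weight p q [] := by simp [weight, Gc, Bc]
    _ ≤ mass p q S := ((summable_weight hp hq hpq).subtype S).le_tsum ⟨[], hS⟩
        fun _ _ => weight_nonneg hp hq _

lemma mass_union (hp : 0 ≤ p) (hq : 0 ≤ q) (hpq : p + q < 1) {S T : Set Ev}
    (h : Disjoint S T) : mass p q (S ∪ T) = mass p q S + mass p q T :=
  Summable.tsum_union_disjoint h ((summable_weight hp hq hpq).subtype S)
    ((summable_weight hp hq hpq).subtype T)

lemma mass_image_append_right (b : Ev) (S : Set Ev) :
    mass p q ((· ++ b) '' S) = mass p q S * weight p q b := by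
  rw [mass, tsum_image _ (List.append_left_injective b).injOn, mass, ← tsum_mul_right]
  exact tsum_congr fun _ => weight_append _ _

lemma mass_image_append_true_cons (hp : 0 ≤ p) (hq : 0 ≤ q) (hpq : p + q < 1) (S : Set Ev) :
    mass p q ((fun x : Ev × Ev => x.1 ++ true :: x.2) '' (S ×ˢ excursions)) =
      p * mass p q S * mass p q excursions := by
  have hsum (A : Set Ev) : Summable fun e : A => ‖weight p q e‖ :=
    ((summable_weight hp hq hpq).subtype A).congr fun e =>
      (Real.norm_of_nonneg (weight_nonneg hp hq e.1)).symm
  rw [mass, tsum_image _ (injOn_append_true_cons S), mass, mass, mul_assoc,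
    tsum_mul_tsum_of_summable_norm (hsum S) (hsum excursions), ← tsum_mul_left,
    ← (Equiv.Set.prod S excursions).tsum_eq]
  refine tsum_congr fun x => ?_
  change weight p q (x.1.1 ++ true :: x.1.2) = p * (weight p q x.1.1 * weight p q x.1.2)
  rw [weight_append, weight_cons, if_pos rfl]
  ring

end Mass

section Comparison

variable {p q : ℝ}

lemma mass_level_succ (hp : 0 ≤ p) (hq : 0 ≤ q) (hpq : p + q < 1) (m : ℕ) :
    mass p q (level (m + 1)) =
      mass p q (level 0) + p * mass p q excursions * mass p q (level m) := by
  rw [level_succ, mass_union hp hq hpq (disjoint_level_zero_image m),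
    mass_image_append_true_cons hp hq hpq]
  ring

lemma pow_mul_mul_le_of_succ_eq {c : ℝ} {a b : ℕ → ℝ} (hq : 0 ≤ q) (hqp : q ≤ p)
    (hc : 0 ≤ c) (ha₀ : 0 ≤ a 0) (hb₀ : 0 ≤ b 0) (ha : ∀ m, a (m + 1) = a 0 + p * c * a m)
    (hb : ∀ m, b (m + 1) = b 0 + q * c * b m) (m : ℕ) :
    q ^ m * a m * b 0 ≤ p ^ m * b m * a 0 := by
  induction m with
  | zero => simp [mul_comm]
  | succ m ih =>
    have hpqc : 0 ≤ p * q * c := by have := hq.trans hqp; positivity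
    calc q ^ (m + 1) * a (m + 1) * b 0
        = q ^ (m + 1) * (a 0 * b 0) + p * q * c * (q ^ m * a m * b 0) := by rw [ha]; ring
      _ ≤ p ^ (m + 1) * (a 0 * b 0) + p * q * c * (p ^ m * b m * a 0) :=
        add_le_add (mul_le_mul_of_nonneg_right (pow_le_pow_left₀ hq hqp _) (mul_nonneg ha₀ hb₀))
          (mul_le_mul_of_nonneg_left ih hpqc)
      _ = p ^ (m + 1) * b (m + 1) * a 0 := by rw [hb]; ring

lemma pow_mul_mass_level_le (hq : 0 ≤ q) (hqp : q ≤ p) (hpq : p + q < 1) (m : ℕ) :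
    q ^ m * mass p q (level m) * mass q p (level 0) ≤
      p ^ m * mass q p (level m) * mass p q (level 0) := by
  have hp := hq.trans hqp
  have hexc : mass q p excursions = mass p q excursions :=
    tsum_congr fun u => weight_swap_of_D_eq_zero u.2.2
  refine pow_mul_mul_le_of_succ_eq (a := fun m => mass p q (level m))
    (b := fun m => mass q p (level m)) hq hqp (mass_nonneg hp hq excursions)
    (mass_nonneg hp hq _) (mass_nonneg hq hp _) (mass_level_succ hp hq hpq) (fun m => ?_) m
  rw [mass_level_succ hq hp (by linarith), hexc]

lemma mass_cone_mul_le (hq : 0 ≤ q) (hqp : q ≤ p) (hpq : p + q < 1) {b : Ev} (hb : N b = 0) :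
    mass p q {e | N e = 0 ∧ b <:+ e} * mass q p {e | N e = 0} ≤
      mass q p {e | N e = 0 ∧ b <:+ e} * mass p q {e | N e = 0} := by
  obtain ⟨m, hm⟩ := Int.exists_eq_neg_ofNat (hb ▸ D_le_N b)
  have hBc : Bc b = Gc b + m := by simp only [D] at hm; omega
  have hpq_b : weight p q b = (p * q) ^ Gc b * q ^ m := by rw [weight, hBc]; ring
  have hqp_b : weight q p b = (p * q) ^ Gc b * p ^ m := by rw [weight, hBc]; ring
  rw [cone_eq_image hb hm, mass_image_append_right, mass_image_append_right, ← level_zero,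
    hpq_b, hqp_b]
  have : 0 ≤ (p * q) ^ Gc b := by have := hq.trans hqp; positivity
  calc mass p q (level m) * ((p * q) ^ Gc b * q ^ m) * mass q p (level 0)
      = (p * q) ^ Gc b * (q ^ m * mass p q (level m) * mass q p (level 0)) := by ring
    _ ≤ (p * q) ^ Gc b * (p ^ m * mass q p (level m) * mass p q (level 0)) :=
      mul_le_mul_of_nonneg_left (pow_mul_mass_level_le hq hqp hpq m) this
    _ = mass q p (level m) * ((p * q) ^ Gc b * p ^ m) * mass p q (level 0) := by ring

end Comparison

section Root

open Classical in
/-- The shortest suffix of `e` lying in `M` (or `e` itself if there is none). -/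
noncomputable def root (M : Set Ev) : Ev → Ev
  | [] => []
  | x :: e => if ∃ s ∈ M, s <:+ e then root M e else x :: e

variable {M : Set Ev}

lemma root_suffix (e : Ev) : root M e <:+ e := by
  induction e with
  | nil => exact List.suffix_rfl
  | cons x e ih =>
    rw [root]
    split_ifs
    · exact ih.trans (List.suffix_cons x e)
    · exact List.suffix_rfl

lemma root_mem {e : Ev} (h : ∃ s ∈ M, s <:+ e) : root M e ∈ M := by
  induction e with
  | nil =>
    obtain ⟨s, hs, hse⟩ := h
    rwa [List.suffix_nil.mp hse] at hs
  | cons x e ih =>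
    rw [root]
    split_ifs with hsuf
    · exact ih hsuf
    · obtain ⟨s, hs, hse⟩ := h
      rcases List.suffix_cons_iff.mp hse with rfl | hse
      · exact hs
      · exact (hsuf ⟨s, hs, hse⟩).elim

lemma root_suffix_of_mem {s e : Ev} (hs : s ∈ M) (hse : s <:+ e) : root M e <:+ s := by
  induction e with
  | nil => rw [List.suffix_nil.mp hse]; exact List.suffix_rfl
  | cons x e ih =>
    rw [root]
    split_ifs with hsuf
    · rcases List.suffix_cons_iff.mp hse with rfl | hse
      · exact (root_suffix e).trans (List.suffix_cons x e)
      · exact ih hse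
    · rcases List.suffix_cons_iff.mp hse with rfl | hse
      · exact List.suffix_rfl
      · exact (hsuf ⟨s, hs, hse⟩).elim

lemma eq_root_of_suffix {s e : Ev} (hs : s ∈ M) (hse : s <:+ root M e) : s = root M e :=
  hse.eq_of_length <| le_antisymm hse.length_le
    (root_suffix_of_mem hs (hse.trans (root_suffix e))).length_le

lemma root_eq_of_minimal {b e : Ev} (hb : b ∈ M) (hbe : b <:+ e)
    (hmin : ∀ s ∈ M, s <:+ b → s = b) : root M e = b :=
  hmin _ (root_mem ⟨b, hb, hbe⟩) (root_suffix_of_mem hb hbe)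

lemma root_fiber_eq (hME : M ⊆ {e | N e = 0})
    (hM : ∀ e ∈ M, ∀ e', N e' = 0 → e <:+ e' → e' ∈ M) {b : Ev}
    (hfib : (root M ⁻¹' {b} ∩ M).Nonempty) :
    N b = 0 ∧ root M ⁻¹' {b} ∩ M = {e | N e = 0 ∧ b <:+ e} := by
  obtain ⟨e₀, rfl, he₀⟩ := hfib
  have hb : root M e₀ ∈ M := root_mem ⟨e₀, he₀, List.suffix_rfl⟩
  refine ⟨hME hb, Set.ext fun e => ⟨fun ⟨he, heM⟩ => ⟨hME heM, he ▸ root_suffix e⟩, ?_⟩⟩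
  rintro ⟨he, hbe⟩
  exact ⟨root_eq_of_minimal hb hbe fun s hs hsb => eq_root_of_suffix hs hsb,
    hM _ hb e he hbe⟩

end Root

lemma tsum_subtype_le_of_fiberwise {α β : Type*} {f g : α → ℝ} (hf : Summable f)
    (hg : Summable g) (S : Set α) (π : α → β)
    (h : ∀ b, ∑' a : ↥(π ⁻¹' {b} ∩ S), f a ≤ ∑' a : ↥(π ⁻¹' {b} ∩ S), g a) :
    ∑' a : S, f a ≤ ∑' a : S, g a := by
  have hfiber (φ : α → ℝ) (b : β) :
      ∑' a : ↥(π ⁻¹' {b}), S.indicator φ a = ∑' a : ↥(π ⁻¹' {b} ∩ S), φ a := by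
    rw [tsum_subtype, tsum_subtype, Set.indicator_indicator]
  rw [tsum_subtype, tsum_subtype]
  refine hasSum_le (fun b => ?_) ((hf.indicator S).hasSum.tsum_fiberwise π)
    ((hg.indicator S).hasSum.tsum_fiberwise π)
  simpa only [hfiber] using h b

section Main

variable {p q : ℝ}

theorem mass_mul_mass_le_of_upClosed (hq : 0 ≤ q) (hqp : q ≤ p) (hpq : p + q < 1) {M : Set Ev}
    (hME : M ⊆ {e | N e = 0}) (hM : ∀ e ∈ M, ∀ e', N e' = 0 → e <:+ e' → e' ∈ M) :
    mass p q M * mass q p {e | N e = 0} ≤ mass q p M * mass p q {e | N e = 0} := by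
  have hp := hq.trans hqp
  change (∑' e : M, weight p q e) * _ ≤ (∑' e : M, weight q p e) * _
  rw [← tsum_mul_right, ← tsum_mul_right]
  refine tsum_subtype_le_of_fiberwise ((summable_weight hp hq hpq).mul_right _)
    ((summable_weight hq hp (by linarith)).mul_right _) M (root M) fun b => ?_
  rw [tsum_mul_right, tsum_mul_right]
  rcases (root M ⁻¹' {b} ∩ M).eq_empty_or_nonempty with hfib | hfib
  · simp [hfib]
  · obtain ⟨hb, hfib⟩ := root_fiber_eq hME hM hfib
    rw [hfib]
    exact mass_cone_mul_le hq hqp hpq hb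

lemma nu_eq_mass (hpq : p + q < 1) (π0 : ℝ) (A : Set Ev) :
    nu p q π0 A = mass p q A * π0 / (mass p q A * π0 + mass q p A * (1 - π0)) := by
  simp only [nu, FG_eq_weight, FB_eq_weight, tsum_mul_left]
  rw [mul_assoc, mul_assoc, ← mul_add, mul_div_mul_left _ _ (by linarith)]
  rfl

end Main

lemma div_le_div_of_cross_le {a b c d π : ℝ} (ha : 0 < a) (hb : 0 < b) (hc : 0 ≤ c)
    (hd : 0 ≤ d) (hπ₀ : 0 < π) (hπ₁ : π < 1) (h : c * (b + d) ≤ (a + c) * d) :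
    (a + c) * π / ((a + c) * π + (b + d) * (1 - π)) ≤ a * π / (a * π + b * (1 - π)) := by
  have hπ : 0 < π * (1 - π) := mul_pos hπ₀ (by linarith)
  rw [div_le_div_iff₀ (by nlinarith) (by nlinarith)]
  nlinarith [mul_le_mul_of_nonneg_left h hπ.le]

theorem stmt_12_general (p q π0 : ℝ) (hq0 : 0 < q) (hqp : q < p)
    (hpq1 : p + q < 1) (h0 : 0 < π0) (h1 : π0 < 1) :
    ∀ L : Set Ev, IsLCS {e : Ev | N e = 0} L →
      nu p q π0 {e : Ev | N e = 0} ≤ nu p q π0 L := by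
  rintro L ⟨⟨e, he⟩, hLE, hlow⟩
  have hp : 0 ≤ p := by linarith
  have hqp1 : q + p < 1 := by linarith
  have hnil : [] ∈ L := hlow e he [] rfl List.nil_suffix
  have hsplit (p q : ℝ) (hp : 0 ≤ p) (hq : 0 ≤ q) (hpq : p + q < 1) :
      mass p q {e | N e = 0} = mass p q L + mass p q ({e | N e = 0} \ L) := by
    rw [← mass_union hp hq hpq Set.disjoint_sdiff_right, Set.union_sdiff_cancel hLE]
  have hcompl := mass_mul_mass_le_of_upClosed hq0.le hqp.le hpq1 (M := {e | N e = 0} \ L)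
    Set.sdiff_subset fun e he e' he' hee' => ⟨he', fun he'L => he.2 (hlow e' he'L e he.1 hee')⟩
  rw [hsplit p q hp hq0.le hpq1, hsplit q p hq0.le hp hqp1] at hcompl
  rw [nu_eq_mass hpq1, nu_eq_mass hpq1, hsplit p q hp hq0.le hpq1, hsplit q p hq0.le hp hqp1]
  refine div_le_div_of_cross_le (mass_pos_of_nil_mem hp hq0.le hpq1 hnil)
    (mass_pos_of_nil_mem hq0.le hp hqp1 hnil) (mass_nonneg hp hq0.le _) (mass_nonneg hq0.le hp _)
    h0 h1 ?_
  linarith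

/-- Every lower contour set `L₀` in `E₀ = {e : N(e) = 0}` satisfies
`ν(L₀) ≥ ν(E₀)`. -/
theorem stmt_12 (p q π0 : ℝ) (hq0 : 0 < q) (hqp : q < p) (hp1 : p < 1)
    (hpq0 : 0 < p + q) (hpq1 : p + q < 1) (h0 : 0 < π0) (h1 : π0 < 1) :
    ∀ L : Set Ev, IsLCS {e : Ev | N e = 0} L →
      nu p q π0 {e : Ev | N e = 0} ≤ nu p q π0 L :=
  stmt_12_general p q π0 hq0 hqp hpq1 h0 h1

end LeftCensored
end
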